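/- Let {f_i}_{i=1}^{α} be a finite collection of functions, where f_i colors k_i-element subsets of a ground set with colors from [n]. Then there exists a finite N ∈ ℕ and a subset C ⊆ [N] with |C| ≥ n such that for every i, the restriction of f_i to k_i-element subsets of C is constant. -/

import Mathlib

/-!
Infinite Ramsey theorem on `ℕ`, by induction on the size `k` of the colored sets: inside an
infinite set, repeatedly take the minimum and shrink the rest to an infinite set on which the
color of (minimum ∪ `k`-set) is constant. The minima form a sequence whose `(k + 1)`-sets are
colored by their least element only, so by pigeonhole infinitely many minima share one color.
Shrinking once per coloring handles finitely many colorings at once, and any `n` elements of the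
resulting infinite set form the required `C`.
-/

open Finset

section Ramsey

variable {β : Type*}

def IsMonochromatic (f : Finset ℕ → β) (k : ℕ) (T : Set ℕ) : Prop :=
  ∃ c, ∀ t : Finset ℕ, ↑t ⊆ T → #t = k → f t = c

theorem IsMonochromatic.mono {f : Finset ℕ → β} {k : ℕ} {T T' : Set ℕ}
    (h : IsMonochromatic f k T) (hT' : T' ⊆ T) : IsMonochromatic f k T' :=
  let ⟨c, hc⟩ := h
  ⟨c, fun t ht hk => hc t (ht.trans hT') hk⟩

/-- For strictly increasing `a`: the color of a `(k + 1)`-subset of the range of `a` is `col i`,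
where `a i` is its least element. -/
def IsMinHomogeneous (f : Finset ℕ → β) (k : ℕ) (a : ℕ → ℕ) (col : ℕ → β) : Prop :=
  ∀ i (t : Finset ℕ), ↑t ⊆ a '' Set.Ioi i → #t = k → f (insert (a i) t) = col i

theorem IsMinHomogeneous.isMonochromatic_image_fiber {f : Finset ℕ → β} {k : ℕ} {a : ℕ → ℕ}
    {col : ℕ → β} (h : IsMinHomogeneous f k a col) (ha : StrictMono a) (c : β) :
    IsMonochromatic f (k + 1) (a '' (col ⁻¹' {c})) := by
  refine ⟨c, fun t ht hk => ?_⟩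
  have hne : t.Nonempty := card_pos.mp (by omega)
  obtain ⟨i, hi, hai⟩ := ht (t.min'_mem hne)
  have hrest : ↑(t.erase (a i)) ⊆ a '' Set.Ioi i := by
    intro y hy
    rw [coe_erase] at hy
    obtain ⟨j, -, rfl⟩ := ht hy.1
    refine ⟨j, ha.lt_iff_lt.mp ?_, rfl⟩
    exact lt_of_le_of_ne (hai ▸ t.min'_le _ hy.1) fun h => hy.2 h.symm
  have hmem : a i ∈ t := hai ▸ t.min'_mem hne
  rw [← insert_erase hmem, h i _ hrest (by rw [card_erase_of_mem hmem]; omega)]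
  exact hi

theorem Set.Infinite.exists_isMinHomogeneous {f : Finset ℕ → β} {k : ℕ}
    (ih : ∀ (g : Finset ℕ → β) (S : Set ℕ), S.Infinite →
      ∃ T ⊆ S, T.Infinite ∧ IsMonochromatic g k T)
    {S : Set ℕ} (hS : S.Infinite) :
    ∃ a : ℕ → ℕ, ∃ col : ℕ → β, StrictMono a ∧ Set.range a ⊆ S ∧ IsMinHomogeneous f k a col := by
  -- From an infinite `U`, pass to an infinite `T ⊆ U \ {min U}` on which the color of
  -- `insert (min U) t` is constant; `a` lists the minima of the iterates.
  have step : ∀ U : {U : Set ℕ // U.Infinite}, ∃ T : {T : Set ℕ // T.Infinite}, ∃ c : β,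
      T.1 ⊆ U.1 \ {sInf U.1} ∧
        ∀ t : Finset ℕ, ↑t ⊆ T.1 → #t = k → f (insert (sInf U.1) t) = c := by
    rintro ⟨U, hU⟩
    obtain ⟨T, hTU, hT, c, hc⟩ :=
      ih (fun t => f (insert (sInf U) t)) (U \ {sInf U}) (hU.sdiff (Set.finite_singleton _))
    exact ⟨⟨T, hT⟩, c, hTU, hc⟩
  choose next color hnext hcolor using step
  set U : ℕ → {U : Set ℕ // U.Infinite} := fun m => next^[m] ⟨S, hS⟩
  have hU_succ : ∀ m, U (m + 1) = next (U m) := fun m => Function.iterate_succ_apply' _ _ _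
  have hmin_mem : ∀ m, sInf (U m).1 ∈ (U m).1 := fun m => Nat.sInf_mem (U m).2.nonempty
  have hanti : Antitone fun m => (U m).1 := antitone_nat_of_succ_le fun m => by
    rw [hU_succ]; exact (hnext _).trans Set.sdiff_subset
  refine ⟨fun m => sInf (U m).1, fun m => color (U m), ?_, ?_, ?_⟩
  · refine strictMono_nat_of_lt_succ fun m => ?_
    show sInf (U m).1 < sInf (U (m + 1)).1
    rw [hU_succ]
    have h := hnext (U m) (hU_succ m ▸ hmin_mem (m + 1))
    exact lt_of_le_of_ne (Nat.sInf_le h.1) (Ne.symm h.2)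
  · rintro _ ⟨m, rfl⟩
    exact hanti (Nat.zero_le m) (hmin_mem m)
  · intro m t ht hk
    refine hcolor (U m) t (fun x hx => ?_) hk
    obtain ⟨j, hj, rfl⟩ := ht hx
    rw [← hU_succ]
    exact hanti (Nat.succ_le_of_lt hj) (hmin_mem j)

theorem Set.Infinite.exists_isMonochromatic_subset [Finite β] (f : Finset ℕ → β) (k : ℕ)
    {S : Set ℕ} (hS : S.Infinite) : ∃ T ⊆ S, T.Infinite ∧ IsMonochromatic f k T := by
  induction k generalizing f S with
  | zero =>
    refine ⟨S, subset_rfl, hS, f ∅, fun t _ ht => ?_⟩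
    rw [Finset.card_eq_zero.mp ht]
  | succ k ih =>
    obtain ⟨a, col, ha, haS, hmin⟩ := hS.exists_isMinHomogeneous (f := f) ih
    obtain ⟨c, hc⟩ := Finite.exists_infinite_fiber col
    refine ⟨a '' (col ⁻¹' {c}), (Set.image_subset_range _ _).trans haS, ?_,
      hmin.isMonochromatic_image_fiber ha c⟩
    exact (Set.infinite_coe_iff.mp hc).image ha.injective.injOn

theorem Set.Infinite.exists_isMonochromatic_subset_forall [Finite β] {ι : Type*}
    (k : ι → ℕ) (f : ι → Finset ℕ → β) (s : Finset ι) {S : Set ℕ} (hS : S.Infinite) :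
    ∃ T ⊆ S, T.Infinite ∧ ∀ i ∈ s, IsMonochromatic (f i) (k i) T := by
  classical
  induction s using Finset.induction_on with
  | empty => exact ⟨S, subset_rfl, hS, by simp⟩
  | insert j s _ ih =>
    obtain ⟨T, hTS, hT, hTs⟩ := ih
    obtain ⟨T', hT'T, hT', hT'j⟩ := hT.exists_isMonochromatic_subset (f j) (k j)
    exact ⟨T', hT'T.trans hTS, hT',
      (Finset.forall_mem_insert _ _ _).mpr ⟨hT'j, fun i hi => (hTs i hi).mono hT'T⟩⟩

end Ramsey

/-- Finite hypergraph Ramsey theorem, simultaneously for a finite collection of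
colorings: given `fᵢ` coloring the `kᵢ`-element subsets of the ground set `ℕ`
with colors from `[n]`, there exist a finite `N` and `C ⊆ [N]` with `|C| ≥ n`
such that every `fᵢ` is constant on the `kᵢ`-element subsets of `C`. -/
theorem stmt5 (α n : ℕ) (k : Fin α → ℕ) (f : Fin α → Finset ℕ → Fin n) :
    ∃ N : ℕ, ∃ C : Finset ℕ, (∀ x ∈ C, x < N) ∧ n ≤ C.card ∧
      ∀ i, ∀ a ⊆ C, a.card = k i → ∀ b ⊆ C, b.card = k i → f i a = f i b := by
  obtain ⟨T, -, hT, hmono⟩ :=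
    Set.infinite_univ.exists_isMonochromatic_subset_forall k f univ
  obtain ⟨C, hCT, hC⟩ := hT.exists_subset_card_eq n
  obtain ⟨N, hN⟩ := C.exists_nat_subset_range
  refine ⟨N, C, fun x hx => mem_range.mp (hN hx), hC.ge, fun i a ha hak b hb hbk => ?_⟩
  obtain ⟨c, hc⟩ := hmono i (mem_univ i)
  rw [hc a ((coe_subset.mpr ha).trans hCT) hak, hc b ((coe_subset.mpr hb).trans hCT) hbk]
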